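/- (Semantic version of Gödel's first incompleteness theorem.) Let T be a theory such that the set Pr_T of Gödel numbers of sentences provable in T is definable in the standard model ω (in particular this holds if T is recursively axiomatizable). If T is sound (every sentence in T is true in ω), then T is incomplete: there is a sentence σ such that T proves neither σ nor ¬σ. -/
import Mathlib


namespace Boolos

/-- Terms of the first-order language of arithmetic: variables v₀,v₁,…, 0, successor s, +, ·. -/
inductive Term : Type
  | var : ℕ → Term
  | zero : Term
  | succ : Term → Term
  | add : Term → Term → Term
  | mul : Term → Term → Term
  deriving DecidableEq

/-- Formulas of the first-order language of arithmetic. -/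
inductive Formula : Type
  | eq : Term → Term → Formula
  | lt : Term → Term → Formula
  | not : Formula → Formula
  | and : Formula → Formula → Formula
  | or : Formula → Formula → Formula
  | imp : Formula → Formula → Formula
  | all : ℕ → Formula → Formula
  | ex : ℕ → Formula → Formula
  deriving DecidableEq

/-- The primitive symbols of the language (finitely many apart from the variables). -/
inductive Symbol : Type
  | zero : Symbol
  | succ : Symbol
  | plus : Symbol
  | times : Symbol
  | eqs : Symbol
  | lts : Symbol
  | nots : Symbol
  | ands : Symbol
  | ors : Symbol
  | imps : Symbol
  | alls : Symbol
  | exs : Symbol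
  | var : ℕ → Symbol
  deriving DecidableEq

/-- Gödel numbers of the primitive symbols. -/
def Symbol.code : Symbol → ℕ
  | .zero => 1
  | .succ => 2
  | .plus => 3
  | .times => 4
  | .eqs => 5
  | .lts => 6
  | .nots => 7
  | .ands => 8
  | .ors => 9
  | .imps => 10
  | .alls => 11
  | .exs => 12
  | .var n => 13 + n

/-- The sequence of symbols occurring in a term. -/
def Term.symbols : Term → List Symbol
  | .var i => [.var i]
  | .zero => [.zero]
  | .succ t => .succ :: t.symbols
  | .add t u => t.symbols ++ .plus :: u.symbols
  | .mul t u => t.symbols ++ .times :: u.symbols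

/-- The sequence of symbols occurring in a formula. -/
def Formula.symbols : Formula → List Symbol
  | .eq t u => t.symbols ++ .eqs :: u.symbols
  | .lt t u => t.symbols ++ .lts :: u.symbols
  | .not φ => .nots :: φ.symbols
  | .and φ ψ => φ.symbols ++ .ands :: ψ.symbols
  | .or φ ψ => φ.symbols ++ .ors :: ψ.symbols
  | .imp φ ψ => φ.symbols ++ .imps :: ψ.symbols
  | .all i φ => .alls :: .var i :: φ.symbols
  | .ex i φ => .exs :: .var i :: φ.symbols

/-- |e| : the length (number of symbols) of a term. -/
def Term.length (t : Term) : ℕ := t.symbols.length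

/-- |μ| : the length (number of symbols) of a formula. -/
def Formula.length (φ : Formula) : ℕ := φ.symbols.length

/-- A fixed standard (pairing-based, injective) Gödel numbering of terms. -/
def Term.code : Term → ℕ
  | .var i => Nat.pair 0 i
  | .zero => Nat.pair 1 0
  | .succ t => Nat.pair 2 t.code
  | .add t u => Nat.pair 3 (Nat.pair t.code u.code)
  | .mul t u => Nat.pair 4 (Nat.pair t.code u.code)

/-- ⌜μ⌝ : the Gödel number of a formula. -/
def Formula.gnum : Formula → ℕ
  | .eq t u => Nat.pair 0 (Nat.pair t.code u.code)
  | .lt t u => Nat.pair 1 (Nat.pair t.code u.code)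
  | .not φ => Nat.pair 2 φ.gnum
  | .and φ ψ => Nat.pair 3 (Nat.pair φ.gnum ψ.gnum)
  | .or φ ψ => Nat.pair 4 (Nat.pair φ.gnum ψ.gnum)
  | .imp φ ψ => Nat.pair 5 (Nat.pair φ.gnum ψ.gnum)
  | .all i φ => Nat.pair 6 (Nat.pair i φ.gnum)
  | .ex i φ => Nat.pair 7 (Nat.pair i φ.gnum)

/-- The variables occurring in a term. -/
def Term.varsOf : Term → Finset ℕ
  | .var i => {i}
  | .zero => ∅
  | .succ t => t.varsOf
  | .add t u => t.varsOf ∪ u.varsOf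
  | .mul t u => t.varsOf ∪ u.varsOf

/-- All variables (free or bound) occurring in a formula. -/
def Formula.allVars : Formula → Finset ℕ
  | .eq t u => t.varsOf ∪ u.varsOf
  | .lt t u => t.varsOf ∪ u.varsOf
  | .not φ => φ.allVars
  | .and φ ψ => φ.allVars ∪ ψ.allVars
  | .or φ ψ => φ.allVars ∪ ψ.allVars
  | .imp φ ψ => φ.allVars ∪ ψ.allVars
  | .all i φ => insert i φ.allVars
  | .ex i φ => insert i φ.allVars

/-- The free variables of a formula. -/
def Formula.freeVars : Formula → Finset ℕ
  | .eq t u => t.varsOf ∪ u.varsOf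
  | .lt t u => t.varsOf ∪ u.varsOf
  | .not φ => φ.freeVars
  | .and φ ψ => φ.freeVars ∪ ψ.freeVars
  | .or φ ψ => φ.freeVars ∪ ψ.freeVars
  | .imp φ ψ => φ.freeVars ∪ ψ.freeVars
  | .all i φ => φ.freeVars.erase i
  | .ex i φ => φ.freeVars.erase i

/-- Substitution of a term for a variable in a term. -/
def Term.subst : Term → ℕ → Term → Term
  | .var i, x, s => if i = x then s else .var i
  | .zero, _, _ => .zero
  | .succ t, x, s => .succ (t.subst x s)
  | .add t u, x, s => .add (t.subst x s) (u.subst x s)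
  | .mul t u, x, s => .mul (t.subst x s) (u.subst x s)

/-- Substitution of a term for the free occurrences of a variable in a formula. -/
def Formula.subst : Formula → ℕ → Term → Formula
  | .eq t u, x, s => .eq (t.subst x s) (u.subst x s)
  | .lt t u, x, s => .lt (t.subst x s) (u.subst x s)
  | .not φ, x, s => .not (φ.subst x s)
  | .and φ ψ, x, s => .and (φ.subst x s) (ψ.subst x s)
  | .or φ ψ, x, s => .or (φ.subst x s) (ψ.subst x s)
  | .imp φ ψ, x, s => .imp (φ.subst x s) (ψ.subst x s)
  | .all i φ, x, s => if i = x then .all i φ else .all i (φ.subst x s)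
  | .ex i φ, x, s => if i = x then .ex i φ else .ex i (φ.subst x s)

/-- The number of occurrences of a variable in a term. -/
def Term.countOcc : Term → ℕ → ℕ
  | .var i, x => if i = x then 1 else 0
  | .zero, _ => 0
  | .succ t, x => t.countOcc x
  | .add t u, x => t.countOcc x + u.countOcc x
  | .mul t u, x => t.countOcc x + u.countOcc x

/-- The number of free occurrences of a variable in a formula. -/
def Formula.countFreeOcc : Formula → ℕ → ℕ
  | .eq t u, x => t.countOcc x + u.countOcc x
  | .lt t u, x => t.countOcc x + u.countOcc x
  | .not φ, x => φ.countFreeOcc x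
  | .and φ ψ, x => φ.countFreeOcc x + ψ.countFreeOcc x
  | .or φ ψ, x => φ.countFreeOcc x + ψ.countFreeOcc x
  | .imp φ ψ, x => φ.countFreeOcc x + ψ.countFreeOcc x
  | .all i φ, x => if i = x then 0 else φ.countFreeOcc x
  | .ex i φ, x => if i = x then 0 else φ.countFreeOcc x

/-- The numeral s s … s 0 for a natural number. -/
def numeral : ℕ → Term
  | 0 => .zero
  | n + 1 => .succ (numeral n)

/-- Structures for the language of arithmetic. -/
structure Struct where
  carrier : Type
  zero : carrier
  succ : carrier → carrier
  add : carrier → carrier → carrier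
  mul : carrier → carrier → carrier
  lt : carrier → carrier → Prop

/-- The value of a term in a structure under an assignment. -/
def Term.val (M : Struct) (v : ℕ → M.carrier) : Term → M.carrier
  | .var i => v i
  | .zero => M.zero
  | .succ t => M.succ (Term.val M v t)
  | .add t u => M.add (Term.val M v t) (Term.val M v u)
  | .mul t u => M.mul (Term.val M v t) (Term.val M v u)

/-- Satisfaction of a formula in a structure under an assignment. -/
def Formula.Realize (M : Struct) : (ℕ → M.carrier) → Formula → Prop
  | v, .eq t u => Term.val M v t = Term.val M v u
  | v, .lt t u => M.lt (Term.val M v t) (Term.val M v u)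
  | v, .not φ => ¬ Formula.Realize M v φ
  | v, .and φ ψ => Formula.Realize M v φ ∧ Formula.Realize M v ψ
  | v, .or φ ψ => Formula.Realize M v φ ∨ Formula.Realize M v ψ
  | v, .imp φ ψ => Formula.Realize M v φ → Formula.Realize M v ψ
  | v, .all i φ => ∀ a : M.carrier, Formula.Realize M (Function.update v i a) φ
  | v, .ex i φ => ∃ a : M.carrier, Formula.Realize M (Function.update v i a) φ

/-- ω : the standard model of arithmetic. -/
@[reducible] def stdModel : Struct :=
  { carrier := ℕ, zero := 0, succ := Nat.succ, add := (· + ·), mul := (· * ·),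
    lt := (· < ·) }

/-- A formula is true if it holds in the standard model ω (under every assignment). -/
def IsTrue (φ : Formula) : Prop := ∀ v : ℕ → ℕ, Formula.Realize stdModel v φ

/-- The value of a (closed) term in the standard model ω. -/
def Term.valNat (t : Term) : ℕ := Term.val stdModel (fun _ => 0) t

/-- A sentence is a formula with no free variables. -/
def Formula.IsSentence (φ : Formula) : Prop := φ.freeVars = ∅

/-- Provability from a theory; by the Gödel completeness theorem, identified with
semantic consequence. -/
def Proves (T : Set Formula) (φ : Formula) : Prop :=
  ∀ (M : Struct) (v : ℕ → M.carrier),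
    (∀ ψ ∈ T, Formula.Realize M v ψ) → Formula.Realize M v φ

/-- Consistency: no formula is both provable and refutable. -/
def Consistent (T : Set Formula) : Prop :=
  ¬ ∃ φ : Formula, Proves T φ ∧ Proves T (.not φ)

/-- The biconditional, as an abbreviation. -/
def Formula.iffF (φ ψ : Formula) : Formula := .and (.imp φ ψ) (.imp ψ φ)

def v0 : Term := .var 0
def v1 : Term := .var 1
def v2 : Term := .var 2

/-- The axioms of Robinson arithmetic Q (with < defined as usual). -/
def QAxioms : Set Formula :=
  { .all 0 (.all 1 (.imp (.eq (.succ v0) (.succ v1)) (.eq v0 v1))),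
    .all 0 (.not (.eq (.succ v0) .zero)),
    .all 0 (.imp (.not (.eq v0 .zero)) (.ex 1 (.eq v0 (.succ v1)))),
    .all 0 (.eq (.add v0 .zero) v0),
    .all 0 (.all 1 (.eq (.add v0 (.succ v1)) (.succ (.add v0 v1)))),
    .all 0 (.eq (.mul v0 .zero) .zero),
    .all 0 (.all 1 (.eq (.mul v0 (.succ v1)) (.add (.mul v0 v1) v0))),
    .all 0 (.all 1 (Formula.iffF (.lt v0 v1) (.ex 2 (.eq (.add v2 (.succ v0)) v1)))) }

/-- Pr_S : the set of Gödel numbers of sentences provable in S. -/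
def PrSet (T : Set Formula) : Set ℕ :=
  {m | ∃ σ : Formula, σ.IsSentence ∧ Proves T σ ∧ m = σ.gnum}

/-- A formula μ with at most the free variable v₀ names the number i in T
if T ⊢ (∀v₀)(μ(v₀) ↔ v₀ = i). -/
def Names (T : Set Formula) (μ : Formula) (i : ℕ) : Prop :=
  μ.freeVars ⊆ {0} ∧ Proves T (.all 0 (Formula.iffF μ (.eq v0 (numeral i))))

/-- i is named in T by some formula of length < m. -/
def Nameable (T : Set Formula) (m i : ℕ) : Prop :=
  ∃ μ : Formula, μ.length < m ∧ Names T μ i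

/-- φ(v₀) defines the set A in the standard model ω. -/
def DefinesSet (φ : Formula) (A : Set ℕ) : Prop :=
  φ.freeVars ⊆ {0} ∧ ∀ i : ℕ, i ∈ A ↔ IsTrue (φ.subst 0 (numeral i))

/-- A set of natural numbers is definable (in ω). -/
def Definable (A : Set ℕ) : Prop := ∃ φ : Formula, DefinesSet φ A

/-- φ(v₀,v₁) defines the binary relation R in the standard model ω. -/
def DefinesRel (φ : Formula) (R : ℕ → ℕ → Prop) : Prop :=
  φ.freeVars ⊆ {0, 1} ∧
    ∀ i j : ℕ, R i j ↔ IsTrue ((φ.subst 0 (numeral i)).subst 1 (numeral j))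

/-- The relation B of Boolos's construction: (i,j) ∈ B iff some formula μ with at most
the free variable v₀, with ⌜μ⌝ < g(j) and |μ| < j, names i. -/
def BRel (T : Set Formula) (g : ℕ → ℕ) (i j : ℕ) : Prop :=
  ∃ μ : Formula, μ.gnum < g j ∧ μ.length < j ∧ Names T μ i

/-- g is a recursive function bounding Gödel numbers in terms of length, as in the
construction: whenever all variables of μ are among the first j ones and |μ| < j,
we have ⌜μ⌝ < g(j). -/
def GoodBound (g : ℕ → ℕ) : Prop :=
  Computable g ∧
    ∀ (μ : Formula) (j : ℕ), μ.allVars ⊆ Finset.range j → μ.length < j → μ.gnum < g j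

/-- ψ(v₀,v₁) ≔ ¬φ(v₀,v₁) ∧ (∀v₂ < v₀) φ(v₂,v₁). -/
def psiOf (φ : Formula) : Formula :=
  .and (.not φ) (.all 2 (.imp (.lt v2 v0) (φ.subst 0 v2)))

/-- The closed term t ≔ 10·(k·k). -/
def tTerm (k : ℕ) : Term := .mul (numeral 10) (.mul (numeral k) (numeral k))

/-- A theory is sound if all of its sentences are true in ω. -/
def Sound (T : Set Formula) : Prop := ∀ σ ∈ T, IsTrue σ

/-! ### Auxiliary lemmas -/

section Aux

lemma Term.val_congr {M : Struct} {v w : ℕ → M.carrier} :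
    ∀ {t : Term}, (∀ i ∈ t.varsOf, v i = w i) → t.val M v = t.val M w := by
  intro t
  induction t with
  | var i => intro h; exact h i (by simp [Term.varsOf])
  | zero => intro _; rfl
  | succ t ih => intro h; simp only [Term.val]; rw [ih h]
  | add t u iht ihu =>
      intro h; simp only [Term.val]
      rw [iht fun i hi => h i (by simp [Term.varsOf, hi]),
        ihu fun i hi => h i (by simp [Term.varsOf, hi])]
  | mul t u iht ihu =>
      intro h; simp only [Term.val]
      rw [iht fun i hi => h i (by simp [Term.varsOf, hi]),
        ihu fun i hi => h i (by simp [Term.varsOf, hi])]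

lemma Formula.realize_congr {M : Struct} :
    ∀ {φ : Formula} {v w : ℕ → M.carrier}, (∀ i ∈ φ.freeVars, v i = w i) →
      (Formula.Realize M v φ ↔ Formula.Realize M w φ) := by
  intro φ
  induction φ with
  | eq t u =>
      intro v w h
      simp only [Formula.Realize]
      rw [Term.val_congr fun i hi => h i (by simp [Formula.freeVars, hi]),
        Term.val_congr (t := u) fun i hi => h i (by simp [Formula.freeVars, hi])]
  | lt t u =>
      intro v w h
      simp only [Formula.Realize]
      rw [Term.val_congr fun i hi => h i (by simp [Formula.freeVars, hi]),
        Term.val_congr (t := u) fun i hi => h i (by simp [Formula.freeVars, hi])]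
  | not φ ih =>
      intro v w h
      simp only [Formula.Realize]
      rw [ih fun i hi => h i (by simpa [Formula.freeVars] using hi)]
  | and φ ψ ihφ ihψ =>
      intro v w h
      simp only [Formula.Realize]
      rw [ihφ fun i hi => h i (by simp [Formula.freeVars, hi]),
        ihψ fun i hi => h i (by simp [Formula.freeVars, hi])]
  | or φ ψ ihφ ihψ =>
      intro v w h
      simp only [Formula.Realize]
      rw [ihφ fun i hi => h i (by simp [Formula.freeVars, hi]),
        ihψ fun i hi => h i (by simp [Formula.freeVars, hi])]
  | imp φ ψ ihφ ihψ =>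
      intro v w h
      simp only [Formula.Realize]
      rw [ihφ fun i hi => h i (by simp [Formula.freeVars, hi]),
        ihψ fun i hi => h i (by simp [Formula.freeVars, hi])]
  | all j φ ih =>
      intro v w h
      simp only [Formula.Realize]
      refine forall_congr' fun a => ih fun i hi => ?_
      rcases eq_or_ne i j with rfl | hij
      · simp [Function.update]
      · simp only [Function.update_of_ne hij]
        exact h i (Finset.mem_erase.2 ⟨hij, hi⟩)
  | ex j φ ih =>
      intro v w h
      simp only [Formula.Realize]
      refine exists_congr fun a => ih fun i hi => ?_
      rcases eq_or_ne i j with rfl | hij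
      · simp [Function.update]
      · simp only [Function.update_of_ne hij]
        exact h i (Finset.mem_erase.2 ⟨hij, hi⟩)

lemma Term.val_subst {M : Struct} {x : ℕ} {s : Term} :
    ∀ {t : Term} {v : ℕ → M.carrier},
      (t.subst x s).val M v = t.val M (Function.update v x (s.val M v)) := by
  intro t
  induction t with
  | var i =>
      intro v
      rcases eq_or_ne i x with rfl | h
      · simp [Term.subst, Term.val, Function.update]
      · simp [Term.subst, h, Term.val, Function.update_of_ne h]
  | zero => intro v; rfl
  | succ t ih => intro v; simp only [Term.subst, Term.val]; rw [ih]
  | add t u iht ihu => intro v; simp only [Term.subst, Term.val]; rw [iht, ihu]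
  | mul t u iht ihu => intro v; simp only [Term.subst, Term.val]; rw [iht, ihu]

lemma Formula.realize_subst_closed {M : Struct} {x : ℕ} {s : Term}
    (hs : s.varsOf = ∅) :
    ∀ {φ : Formula} {v : ℕ → M.carrier},
      (Formula.Realize M v (φ.subst x s) ↔
        Formula.Realize M (Function.update v x (s.val M v)) φ) := by
  have hval : ∀ v w : ℕ → M.carrier, s.val M v = s.val M w := fun v w =>
    Term.val_congr (by simp [hs])
  intro φ
  induction φ with
  | eq t u => intro v; simp only [Formula.subst, Formula.Realize, Term.val_subst]
  | lt t u => intro v; simp only [Formula.subst, Formula.Realize, Term.val_subst]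
  | not φ ih => intro v; simp only [Formula.subst, Formula.Realize, ih]
  | and φ ψ ihφ ihψ => intro v; simp only [Formula.subst, Formula.Realize, ihφ, ihψ]
  | or φ ψ ihφ ihψ => intro v; simp only [Formula.subst, Formula.Realize, ihφ, ihψ]
  | imp φ ψ ihφ ihψ => intro v; simp only [Formula.subst, Formula.Realize, ihφ, ihψ]
  | all j φ ih =>
      intro v
      rcases eq_or_ne j x with rfl | hjx
      · simp only [Formula.subst, if_pos rfl, Formula.Realize]
        refine forall_congr' fun a => ?_
        rw [Function.update_idem]
      · simp only [Formula.subst, if_neg hjx, Formula.Realize]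
        refine forall_congr' fun a => ?_
        rw [ih, hval (Function.update v j a) v, Function.update_comm hjx]
  | ex j φ ih =>
      intro v
      rcases eq_or_ne j x with rfl | hjx
      · simp only [Formula.subst, if_pos rfl, Formula.Realize]
        refine exists_congr fun a => ?_
        rw [Function.update_idem]
      · simp only [Formula.subst, if_neg hjx, Formula.Realize]
        refine exists_congr fun a => ?_
        rw [ih, hval (Function.update v j a) v, Function.update_comm hjx]

@[simp] lemma numeral_varsOf : ∀ n : ℕ, (numeral n).varsOf = ∅ := by
  intro n; induction n with
  | zero => rfl
  | succ n ih => simp [numeral, Term.varsOf, ih]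

@[simp] lemma numeral_val (v : ℕ → ℕ) : ∀ n : ℕ, (numeral n).val stdModel v = n := by
  intro n; induction n with
  | zero => rfl
  | succ n ih => simp [numeral, Term.val, ih]

@[simp] lemma stdModel_zero : stdModel.zero = 0 := rfl
@[simp] lemma stdModel_succ (x : ℕ) : stdModel.succ x = x + 1 := rfl
@[simp] lemma stdModel_add (x y : ℕ) : stdModel.add x y = x + y := rfl
@[simp] lemma stdModel_mul (x y : ℕ) : stdModel.mul x y = x * y := rfl
@[simp] lemma stdModel_lt (x y : ℕ) : stdModel.lt x y ↔ x < y := Iff.rfl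

lemma mod_char {a d r : ℕ} (hd : 0 < d) : a % d = r ↔ ∃ q, q * d + r = a ∧ r < d := by
  constructor
  · rintro rfl
    exact ⟨a / d, by rw [Nat.mul_comm, Nat.div_add_mod], Nat.mod_lt _ hd⟩
  · rintro ⟨q, rfl, hr⟩
    rw [Nat.mul_comm, Nat.mul_add_mod, Nat.mod_eq_of_lt hr]

/-- Existence half of Gödel's β-function lemma. -/
lemma beta_exists (f : ℕ → ℕ) (n : ℕ) :
    ∃ a m : ℕ, ∀ i ≤ n, a % (m * (i + 1) + 1) = f i := by
  set K : ℕ := n + 1 + (Finset.range (n + 1)).sup f with hK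
  set m : ℕ := Nat.factorial K with hm
  have hfK : ∀ i ≤ n, f i ≤ K := by
    intro i hi
    have : f i ≤ (Finset.range (n + 1)).sup f :=
      Finset.le_sup (Finset.mem_range.mpr (by omega))
    omega
  have hmK : K ≤ m := Nat.self_le_factorial K
  have hmpos : 0 < m := hm ▸ Nat.factorial_pos K
  have hflt : ∀ i ≤ n, f i < m * (i + 1) + 1 := by
    intro i hi
    have h1 : f i ≤ m := le_trans (hfK i hi) hmK
    have h2 : m ≤ m * (i + 1) := Nat.le_mul_of_pos_right m (by omega)
    omega
  have hcop : ∀ i j : ℕ, i < j → j ≤ n →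
      Nat.Coprime (m * (i + 1) + 1) (m * (j + 1) + 1) := by
    intro i j hij hj
    by_contra hnc
    obtain ⟨p, pp, hpd⟩ := Nat.exists_prime_and_dvd hnc
    have h1 : p ∣ m * (i + 1) + 1 := hpd.trans (Nat.gcd_dvd_left _ _)
    have h2 : p ∣ m * (j + 1) + 1 := hpd.trans (Nat.gcd_dvd_right _ _)
    have hpm : ¬ p ∣ m := by
      intro hpm
      have : p ∣ 1 := by
        have := Nat.dvd_sub h1 (hpm.mul_right (i + 1))
        simpa using this
      exact pp.ne_one (Nat.dvd_one.mp this)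
    have heq : (m * (j + 1) + 1) - (m * (i + 1) + 1) = m * (j - i) := by
      have h3 : m * (j + 1) = m * (i + 1) + m * (j - i) := by
        rw [← Nat.mul_add]; congr 1; omega
      omega
    have hsub : p ∣ m * (j - i) := heq ▸ Nat.dvd_sub h2 h1
    have hdji : p ∣ j - i := (pp.dvd_mul.mp hsub).resolve_left hpm
    have hple : p ≤ j - i := Nat.le_of_dvd (by omega) hdji
    have : p ∣ m := hm ▸ Nat.dvd_factorial pp.pos (by omega)
    exact hpm this
  have key : ∀ k, k ≤ n + 1 → ∃ a, ∀ i < k, a % (m * (i + 1) + 1) = f i := by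
    intro k
    induction k with
    | zero => exact fun _ => ⟨0, fun i hi => absurd hi (by omega)⟩
    | succ k ih =>
        intro hk
        obtain ⟨a, ha⟩ := ih (by omega)
        have hcopP : Nat.Coprime (∏ i ∈ Finset.range k, (m * (i + 1) + 1))
            (m * (k + 1) + 1) :=
          Nat.Coprime.prod_left fun i hi =>
            hcop i k (Finset.mem_range.mp hi) (by omega)
        obtain ⟨z, hz1, hz2⟩ := Nat.chineseRemainder hcopP a (f k)
        refine ⟨z, fun i hi => ?_⟩
        rcases Nat.lt_succ_iff_lt_or_eq.mp hi with hik | rfl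
        · have hdvd : (m * (i + 1) + 1) ∣ ∏ i ∈ Finset.range k, (m * (i + 1) + 1) :=
            Finset.dvd_prod_of_mem _ (Finset.mem_range.mpr hik)
          have : z % (m * (i + 1) + 1) = a % (m * (i + 1) + 1) := hz1.of_dvd hdvd
          rw [this]; exact ha i hik
        · have : z % (m * (i + 1) + 1) = f i % (m * (i + 1) + 1) := hz2
          rw [this, Nat.mod_eq_of_lt (hflt i (by omega))]
  obtain ⟨a, ha⟩ := key (n + 1) le_rfl
  exact ⟨a, m, fun i hi => ha i (by omega)⟩

/-- The code of the numeral for `n`. -/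
def cNum (n : ℕ) : ℕ := (numeral n).code

lemma cNum_zero : cNum 0 = Nat.pair 1 0 := rfl
lemma cNum_succ (n : ℕ) : cNum (n + 1) = Nat.pair 2 (cNum n) := rfl

lemma cNum_char (n y : ℕ) :
    (∃ a m : ℕ, a % (m * (0 + 1) + 1) = Nat.pair 1 0 ∧
      (∀ i < n, Nat.pair 2 (a % (m * (i + 1) + 1)) = a % (m * (i + 1 + 1) + 1)) ∧
      a % (m * (n + 1) + 1) = y) ↔ y = cNum n := by
  constructor
  · rintro ⟨a, m, h0, hstep, hn⟩
    have H : ∀ i ≤ n, a % (m * (i + 1) + 1) = cNum i := by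
      intro i hi
      induction i with
      | zero => simpa [cNum_zero] using h0
      | succ i ih =>
          rw [cNum_succ, ← ih (by omega)]
          exact (hstep i (by omega)).symm
    rw [← hn, H n le_rfl]
  · rintro rfl
    obtain ⟨a, m, ha⟩ := beta_exists cNum n
    exact ⟨a, m, by simpa [cNum_zero] using ha 0 (by omega),
      fun i hi => by rw [ha i (by omega), ha (i + 1) (by omega), cNum_succ],
      ha n le_rfl⟩

/-- Formula expressing `Nat.pair a b = c`. -/
def pairF (a b c : Term) : Formula :=
  .or (.and (.lt a b) (.eq (.add (.mul b b) a) c))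
      (.and (.not (.lt a b)) (.eq (.add (.add (.mul a a) a) b) c))

lemma pairF_realize (v : ℕ → ℕ) (a b c : Term) :
    Formula.Realize stdModel v (pairF a b c) ↔
      Nat.pair (a.val stdModel v) (b.val stdModel v) = c.val stdModel v := by
  by_cases h : a.val stdModel v < b.val stdModel v <;>
    simp [pairF, Formula.Realize, Term.val, Nat.pair, h]

/-- Formula expressing `a % (m * (i + 1) + 1) = r`, with `q` a fresh variable. -/
def betaF (q : ℕ) (a m i r : Term) : Formula :=
  .ex q (.and (.eq (.add (.mul (.var q) (.succ (.mul m (.succ i)))) r) a)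
              (.lt r (.succ (.mul m (.succ i)))))

lemma betaF_realize (v : ℕ → ℕ) (q : ℕ) (a m i r : Term)
    (ha : q ∉ a.varsOf) (hm : q ∉ m.varsOf) (hi : q ∉ i.varsOf) (hr : q ∉ r.varsOf) :
    Formula.Realize stdModel v (betaF q a m i r) ↔
      (a.val stdModel v) % (m.val stdModel v * (i.val stdModel v + 1) + 1)
        = r.val stdModel v := by
  have hupd : ∀ (Q : ℕ) (t : Term), q ∉ t.varsOf →
      t.val stdModel (Function.update v q Q) = t.val stdModel v := fun Q t ht =>
    Term.val_congr fun j hj => Function.update_of_ne (by rintro rfl; exact ht hj) _ _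
  simp only [betaF, Formula.Realize, Term.val, stdModel_succ, stdModel_add,
    stdModel_mul, stdModel_lt, Function.update_self]
  rw [mod_char (by omega)]
  refine exists_congr fun Q => ?_
  rw [hupd Q a ha, hupd Q m hm, hupd Q i hi, hupd Q r hr]

/-- The step condition of the β-coded recursion computing `cNum`. -/
lemma realize_eq {M v} {t u : Term} :
    Formula.Realize M v (.eq t u) ↔ t.val M v = u.val M v := Iff.rfl
lemma realize_lt' {M v} {t u : Term} :
    Formula.Realize M v (.lt t u) ↔ M.lt (t.val M v) (u.val M v) := Iff.rfl
lemma realize_not {M v} {φ : Formula} :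
    Formula.Realize M v (.not φ) ↔ ¬ Formula.Realize M v φ := Iff.rfl
lemma realize_and {M v} {φ ψ : Formula} :
    Formula.Realize M v (.and φ ψ) ↔ Formula.Realize M v φ ∧ Formula.Realize M v ψ := Iff.rfl
lemma realize_or {M v} {φ ψ : Formula} :
    Formula.Realize M v (.or φ ψ) ↔ Formula.Realize M v φ ∨ Formula.Realize M v ψ := Iff.rfl
lemma realize_imp {M v} {φ ψ : Formula} :
    Formula.Realize M v (.imp φ ψ) ↔ (Formula.Realize M v φ → Formula.Realize M v ψ) := Iff.rfl
lemma realize_all {M v} {i : ℕ} {φ : Formula} :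
    Formula.Realize M v (.all i φ) ↔
      ∀ a, Formula.Realize M (Function.update v i a) φ := Iff.rfl
lemma realize_ex {M v} {i : ℕ} {φ : Formula} :
    Formula.Realize M v (.ex i φ) ↔
      ∃ a, Formula.Realize M (Function.update v i a) φ := Iff.rfl

/-- The step condition of the β-coded recursion computing `cNum`. -/
def stepF : Formula :=
  .ex 11 (.ex 12 (.and (betaF 13 (.var 2) (.var 3) (.var 10) (.var 11))
    (.and (betaF 13 (.var 2) (.var 3) (.succ (.var 10)) (.var 12))
          (pairF (numeral 2) (.var 11) (.var 12)))))

/-- Formula expressing `v 9 = cNum (v 0)`. -/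
def cnumF : Formula :=
  .ex 2 (.ex 3 (.and (betaF 13 (.var 2) (.var 3) .zero (numeral 2))
    (.and (.all 10 (.imp (.lt (.var 10) (.var 0)) stepF))
          (betaF 13 (.var 2) (.var 3) (.var 0) (.var 9)))))

lemma notmem_varsOf_var {q k : ℕ} (h : q ≠ k) : q ∉ (Term.var k).varsOf := by
  simp [Term.varsOf, h]

lemma notmem_varsOf_succ_var {q k : ℕ} (h : q ≠ k) : q ∉ (Term.succ (.var k)).varsOf := by
  simp [Term.varsOf, h]

lemma notmem_varsOf_zero {q : ℕ} : q ∉ (Term.zero).varsOf := by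
  simp [Term.varsOf]

lemma notmem_varsOf_numeral {q n : ℕ} : q ∉ (numeral n).varsOf := by
  simp

lemma betaF_realize_zero (w : ℕ → ℕ) :
    Formula.Realize stdModel w (betaF 13 (.var 2) (.var 3) .zero (numeral 2)) ↔
      w 2 % (w 3 * (0 + 1) + 1) = 2 := by
  rw [betaF_realize w 13 _ _ _ _ (by simp [Term.varsOf]) (by simp [Term.varsOf])
    (by simp [Term.varsOf]) (by simp)]
  simp [Term.val]

lemma betaF_realize_i (w : ℕ → ℕ) :
    Formula.Realize stdModel w (betaF 13 (.var 2) (.var 3) (.var 10) (.var 11)) ↔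
      w 2 % (w 3 * (w 10 + 1) + 1) = w 11 := by
  rw [betaF_realize w 13 _ _ _ _ (by simp [Term.varsOf]) (by simp [Term.varsOf])
    (by simp [Term.varsOf]) (by simp [Term.varsOf])]
  simp [Term.val]

lemma betaF_realize_si (w : ℕ → ℕ) :
    Formula.Realize stdModel w (betaF 13 (.var 2) (.var 3) (.succ (.var 10)) (.var 12)) ↔
      w 2 % (w 3 * (w 10 + 1 + 1) + 1) = w 12 := by
  rw [betaF_realize w 13 _ _ _ _ (by simp [Term.varsOf]) (by simp [Term.varsOf])
    (by simp [Term.varsOf]) (by simp [Term.varsOf])]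
  simp [Term.val]

lemma betaF_realize_fin (w : ℕ → ℕ) :
    Formula.Realize stdModel w (betaF 13 (.var 2) (.var 3) (.var 0) (.var 9)) ↔
      w 2 % (w 3 * (w 0 + 1) + 1) = w 9 := by
  rw [betaF_realize w 13 _ _ _ _ (by simp [Term.varsOf]) (by simp [Term.varsOf])
    (by simp [Term.varsOf]) (by simp [Term.varsOf])]
  simp [Term.val]

lemma cnumF_realize (v : ℕ → ℕ) :
    Formula.Realize stdModel v cnumF ↔ v 9 = cNum (v 0) := by
  rw [← cNum_char (v 0) (v 9)]
  have hpair10 : Nat.pair 1 0 = (2 : ℕ) := by decide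
  rw [hpair10]
  simp only [cnumF, stepF, realize_ex, realize_and, realize_all, realize_imp,
    realize_lt', betaF_realize_zero, betaF_realize_i, betaF_realize_si,
    betaF_realize_fin, pairF_realize,
    Term.val, Function.update, numeral_val, stdModel_zero, stdModel_succ,
    stdModel_add, stdModel_mul, stdModel_lt]
  norm_num

/-- Formula expressing the chain of pairings building `DNum` from `cNum`. -/
def chainF : Formula :=
  .ex 4 (.ex 5 (.ex 6 (.ex 7 (.ex 8 (
    .and (pairF (numeral 0) (.var 9) (.var 4))
    (.and (pairF (numeral 0) (.var 4) (.var 5))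
    (.and (pairF (.var 5) (.var 0) (.var 6))
    (.and (pairF (numeral 3) (.var 6) (.var 7))
    (.and (pairF (numeral 0) (.var 7) (.var 8))
          (pairF (numeral 7) (.var 8) (.var 1)))))))))))

/-- The Gödel number of the diagonalization of the formula with Gödel number `n`. -/
def DNum (n : ℕ) : ℕ :=
  Nat.pair 7 (Nat.pair 0 (Nat.pair 3 (Nat.pair (Nat.pair 0 (Nat.pair 0 (cNum n))) n)))

lemma chainF_realize (v : ℕ → ℕ) :
    Formula.Realize stdModel v chainF ↔
      v 1 = Nat.pair 7 (Nat.pair 0 (Nat.pair 3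
        (Nat.pair (Nat.pair 0 (Nat.pair 0 (v 9))) (v 0)))) := by
  simp only [chainF, realize_ex, realize_and, pairF_realize, Term.val,
    Function.update, numeral_val]
  norm_num
  exact eq_comm

/-- The formula defining the graph of `DNum` (input `v₀`, output `v₁`). -/
def deltaF : Formula := .ex 9 (.and cnumF chainF)

lemma deltaF_realize (v : ℕ → ℕ) :
    Formula.Realize stdModel v deltaF ↔ v 1 = DNum (v 0) := by
  simp only [deltaF, realize_ex, realize_and, cnumF_realize, chainF_realize,
    Function.update]
  norm_num
  rfl

lemma Term.code_inj : ∀ t u : Term, t.code = u.code → t = u := by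
  intro t
  induction t with
  | var i =>
      intro u h
      cases u <;> simp [Term.code, Nat.pair_eq_pair] at h <;> simp [h]
  | zero =>
      intro u h
      cases u <;> simp [Term.code, Nat.pair_eq_pair] at h <;> rfl
  | succ t ih =>
      intro u h
      cases u <;> simp [Term.code, Nat.pair_eq_pair] at h <;>
        exact congrArg Term.succ (ih _ h)
  | add t₁ t₂ ih1 ih2 =>
      intro u h
      cases u <;> simp [Term.code, Nat.pair_eq_pair] at h <;>
        rw [ih1 _ h.1, ih2 _ h.2]
  | mul t₁ t₂ ih1 ih2 =>
      intro u h
      cases u <;> simp [Term.code, Nat.pair_eq_pair] at h <;>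
        rw [ih1 _ h.1, ih2 _ h.2]

lemma Formula.gnum_inj : ∀ φ ψ : Formula, φ.gnum = ψ.gnum → φ = ψ := by
  intro φ
  induction φ with
  | eq t u =>
      intro ψ h
      cases ψ <;> simp [Formula.gnum, Nat.pair_eq_pair] at h <;>
        rw [Term.code_inj _ _ h.1, Term.code_inj _ _ h.2]
  | lt t u =>
      intro ψ h
      cases ψ <;> simp [Formula.gnum, Nat.pair_eq_pair] at h <;>
        rw [Term.code_inj _ _ h.1, Term.code_inj _ _ h.2]
  | not φ ih =>
      intro ψ h
      cases ψ <;> simp [Formula.gnum, Nat.pair_eq_pair] at h <;>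
        exact congrArg Formula.not (ih _ h)
  | and φ₁ φ₂ ih1 ih2 =>
      intro ψ h
      cases ψ <;> simp [Formula.gnum, Nat.pair_eq_pair] at h <;>
        rw [ih1 _ h.1, ih2 _ h.2]
  | or φ₁ φ₂ ih1 ih2 =>
      intro ψ h
      cases ψ <;> simp [Formula.gnum, Nat.pair_eq_pair] at h <;>
        rw [ih1 _ h.1, ih2 _ h.2]
  | imp φ₁ φ₂ ih1 ih2 =>
      intro ψ h
      cases ψ <;> simp [Formula.gnum, Nat.pair_eq_pair] at h <;>
        rw [ih1 _ h.1, ih2 _ h.2]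
  | all i φ ih =>
      intro ψ h
      cases ψ <;> simp [Formula.gnum, Nat.pair_eq_pair] at h <;>
        rw [h.1, ih _ h.2]
  | ex i φ ih =>
      intro ψ h
      cases ψ <;> simp [Formula.gnum, Nat.pair_eq_pair] at h <;>
        rw [h.1, ih _ h.2]

/-- Realization of a formula with free variables among `{v₀}` only depends on `v 0`. -/
lemma realize_congr_zero (τ : Formula) (hτ : τ.freeVars ⊆ {0}) {w w' : ℕ → ℕ}
    (h0 : w 0 = w' 0) :
    Formula.Realize stdModel w τ ↔ Formula.Realize stdModel w' τ := by
  refine Formula.realize_congr fun i hi => ?_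
  have : i = 0 := by simpa using hτ hi
  subst this; exact h0

/-- The diagonalization of a formula. -/
def diagF (ψ : Formula) : Formula :=
  .ex 0 (.and (.eq (.var 0) (numeral ψ.gnum)) ψ)

lemma gnum_diagF (ψ : Formula) : (diagF ψ).gnum = DNum ψ.gnum := by
  have h0 : Term.code (.var 0) = 0 := by decide
  have h00 : Nat.pair 0 0 = 0 := by decide
  simp [diagF, Formula.gnum, Term.code, DNum, cNum, h0, h00]

lemma diagF_isSentence (ψ : Formula) (hψ : ψ.freeVars ⊆ {0}) :
    (diagF ψ).IsSentence := by
  rw [Formula.IsSentence, Finset.eq_empty_iff_forall_notMem]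
  intro x hx
  simp only [diagF, Formula.freeVars, Term.varsOf, numeral_varsOf,
    Finset.mem_erase, Finset.mem_union, Finset.mem_singleton,
    Finset.notMem_empty, or_false] at hx
  obtain ⟨hx0, h⟩ := hx
  rcases h with h | h
  · exact hx0 h
  · exact hx0 (by simpa using hψ h)

lemma diagF_isTrue_iff (ψ : Formula) :
    IsTrue (diagF ψ) ↔
      ∀ v : ℕ → ℕ, Formula.Realize stdModel (Function.update v 0 ψ.gnum) ψ := by
  simp only [IsTrue, diagF, realize_ex, realize_and, realize_eq, Term.val,
    numeral_val, Function.update_self]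
  constructor
  · intro h v
    obtain ⟨a, ha, h2⟩ := h v
    subst ha
    exact h2
  · intro h v
    exact ⟨ψ.gnum, rfl, h v⟩

/-- The Gödel-style formula: `v₀`'s diagonalization is not provable. -/
def phiF (τ : Formula) : Formula :=
  .ex 1 (.and deltaF (.ex 0 (.and (.eq (.var 0) (.var 1)) (.not τ))))

lemma phiF_realize (τ : Formula) (hτ : τ.freeVars ⊆ {0}) (v : ℕ → ℕ) :
    Formula.Realize stdModel v (phiF τ) ↔
      ¬ Formula.Realize stdModel (Function.update v 0 (DNum (v 0))) τ := by
  simp only [phiF, realize_ex, realize_and, realize_eq, realize_not,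
    deltaF_realize, Term.val]
  constructor
  · rintro ⟨b, hb, a, ha, hτa⟩
    simp only [Function.update] at hb ha
    norm_num at hb ha
    intro hreal
    refine hτa ((realize_congr_zero τ hτ ?_).mpr hreal)
    simp [Function.update, ha, hb]
  · intro h
    refine ⟨DNum (v 0), by simp [Function.update], DNum (v 0),
      by simp [Function.update], fun hreal => h ?_⟩
    exact (realize_congr_zero τ hτ (by simp [Function.update])).mp hreal

lemma phiF_freeVars (τ : Formula) (hτ : τ.freeVars ⊆ {0}) :
    (phiF τ).freeVars ⊆ {0} := by
  have hδ : deltaF.freeVars ⊆ {0, 1} := by decide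
  intro x hx
  have hfv : (phiF τ).freeVars =
      ((deltaF.freeVars ∪
        ((((Term.var 0 : Term).varsOf ∪ (Term.var 1 : Term).varsOf) ∪
          τ.freeVars).erase 0)).erase 1) := rfl
  rw [hfv] at hx
  simp only [Term.varsOf, Finset.mem_erase, Finset.mem_union,
    Finset.mem_singleton] at hx
  obtain ⟨hx1, h⟩ := hx
  rcases h with h | h
  · have := hδ h
    simp only [Finset.mem_insert, Finset.mem_singleton] at this
    rcases this with h0 | h1
    · simp [h0]
    · exact absurd h1 hx1
  · obtain ⟨hx0, h⟩ := h
    rcases h with (h | h) | h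
    · exact absurd h hx0
    · exact absurd h hx1
    · exact absurd (by simpa using hτ h) hx0

lemma isTrue_subst_iff (τ : Formula) (hτ : τ.freeVars ⊆ {0}) (i : ℕ) :
    IsTrue (τ.subst 0 (numeral i)) ↔
      Formula.Realize stdModel (Function.update (fun _ => 0) 0 i) τ := by
  constructor
  · intro h
    have := h (fun _ => 0)
    rwa [Formula.realize_subst_closed (numeral_varsOf i), numeral_val _ i] at this
  · intro h v
    rw [Formula.realize_subst_closed (numeral_varsOf i), numeral_val]
    exact (realize_congr_zero τ hτ (by simp)).mpr h

end Aux

/-- **Semantic version of Gödel's first incompleteness theorem.** If Pr_T is definable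
and T is sound, then T is incomplete. -/
theorem semantic_incompleteness
    (T : Set Formula) (hTsent : ∀ σ ∈ T, σ.IsSentence)
    (hdef : Definable (PrSet T)) (hsound : Sound T) :
    ∃ σ : Formula, σ.IsSentence ∧ ¬ Proves T σ ∧ ¬ Proves T (.not σ) := by
  by_contra hcon
  have hcomp : ∀ σ : Formula, σ.IsSentence → Proves T σ ∨ Proves T (.not σ) := by
    intro σ hσ
    by_contra h
    push_neg at h
    exact hcon ⟨σ, hσ, h.1, h.2⟩
  obtain ⟨τ, hτfv, hτdef⟩ := hdef
  have hProvTrue : ∀ σ : Formula, Proves T σ → IsTrue σ := by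
    intro σ h v
    exact h stdModel v (fun ψ hψ => hsound ψ hψ v)
  have hTrueProv : ∀ σ : Formula, σ.IsSentence → IsTrue σ → Proves T σ := by
    intro σ hσ htrue
    rcases hcomp σ hσ with h | h
    · exact h
    · exact absurd (htrue (fun _ => 0)) (hProvTrue _ h (fun _ => 0))
  set φ := phiF τ with hφ
  have hφfv : φ.freeVars ⊆ {0} := phiF_freeVars τ hτfv
  set σ := diagF φ with hσdef
  have hσsent : σ.IsSentence := diagF_isSentence φ hφfv
  have hσg : σ.gnum = DNum φ.gnum := gnum_diagF φ
  have hkey : IsTrue σ ↔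
      ¬ Formula.Realize stdModel (Function.update (fun _ => 0) 0 (DNum φ.gnum)) τ := by
    rw [hσdef, diagF_isTrue_iff φ]
    constructor
    · intro h
      have h1 := h (fun _ => 0)
      rw [phiF_realize τ hτfv] at h1
      intro h2
      exact h1 ((realize_congr_zero τ hτfv (by simp [Function.update])).mpr h2)
    · intro h v
      rw [phiF_realize τ hτfv]
      intro h2
      exact h ((realize_congr_zero τ hτfv (by simp [Function.update])).mp h2)
  have hmem : Formula.Realize stdModel
      (Function.update (fun _ => 0) 0 (DNum φ.gnum)) τ ↔ DNum φ.gnum ∈ PrSet T := by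
    rw [← isTrue_subst_iff τ hτfv]
    exact (hτdef (DNum φ.gnum)).symm
  have hiff : DNum φ.gnum ∈ PrSet T ↔ IsTrue σ := by
    constructor
    · rintro ⟨σ', hs', hp', he'⟩
      have : σ' = σ := Formula.gnum_inj _ _ (by rw [← he', hσg])
      subst this
      exact hProvTrue _ hp'
    · intro h
      exact ⟨σ, hσsent, hTrueProv σ hσsent h, hσg.symm⟩
  have : IsTrue σ ↔ ¬ IsTrue σ := hkey.trans (not_congr (hmem.trans hiff))
  exact iff_not_self this

end Boolos
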